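/- arXiv:2409.04894 — 10 statements merged into one kernel-verified Lean document; each statement's English description precedes it below -/
import Mathlib

section
/- Let A be a meet-semilattice and let B be a sub-meet-semilattice of the Bruns–Lakser completion BL A that contains every principal D-ideal ↓a (a ∈ A). Then the poset of D-ideals of B (i.e., the Bruns–Lakser completion BL B, formed with respect to the inherited inclusion order on B) is order-isomorphic to BL A. -/
open Cardinal

section Defs

variable {A : Type*} [SemilatticeInf A]

/-- `S ⊆ A` is admissible, with distributive join `x`: the join of `S` is `x` and
for every `a`, `a ⊓ x` is the join of `{a ⊓ s : s ∈ S}`. -/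
def IsDistJoin (S : Set A) (x : A) : Prop :=
  IsLUB S x ∧ ∀ a : A, IsLUB ((fun s => a ⊓ s) '' S) (a ⊓ x)

/-- A D-ideal of the meet-semilattice `A`: a downset closed under joins of
admissible subsets. -/
def IsDIdeal (E : Set A) : Prop :=
  IsLowerSet E ∧ ∀ S : Set A, S ⊆ E → ∀ x : A, IsDistJoin S x → x ∈ E

/-- `J` is the join of the family `T` in the Bruns–Lakser completion `BL A`:
the least D-ideal containing `⋃₀ T`. -/
def IsBLJoin (T : Set (Set A)) (J : Set A) : Prop :=
  IsDIdeal J ∧ ⋃₀ T ⊆ J ∧ ∀ E : Set A, IsDIdeal E → ⋃₀ T ⊆ E → J ⊆ E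

/-- A family of D-ideals closed under finite meets (intersections, including the
top `Set.univ` of `BL A`) and under κ-joins computed in `BL A`. -/
def BLClosed (κ : Cardinal) (C : Set (Set A)) : Prop :=
  Set.univ ∈ C ∧ (∀ E ∈ C, ∀ F ∈ C, E ∩ F ∈ C) ∧
    ∀ T : Set (Set A), T ⊆ C → #T < κ → ∀ J : Set A, IsBLJoin T J → J ∈ C

/-- The sub-κ-frame of `BL A` generated by `G`: the smallest subset of `BL A`
containing `G` and closed under finite meets and κ-joins computed in `BL A`. -/
def BLKappa (κ : Cardinal) (G : Set (Set A)) : Set (Set A) :=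
  ⋂₀ {C : Set (Set A) | G ⊆ C ∧ C ⊆ {E : Set A | IsDIdeal E} ∧ BLClosed κ C}

/-- A normal ideal: a downset `N` with `N = Nᵘˡ`. -/
def IsNormalIdeal (N : Set A) : Prop :=
  IsLowerSet N ∧ N = lowerBounds (upperBounds N)

/-- The relative annihilator `⟨a,b⟩ = {x : a ⊓ x ≤ b}`. -/
def RelAnn (a b : A) : Set A := {x : A | a ⊓ x ≤ b}

end Defs

/-- κ-completeness: every κ-join exists. -/
def IsKappaComplete (A : Type*) [Preorder A] (κ : Cardinal) : Prop :=
  ∀ S : Set A, #S < κ → ∃ x : A, IsLUB S x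

/-- κJD: every existing κ-join is a distributive join. -/
def IsKappaJD (A : Type*) [SemilatticeInf A] (κ : Cardinal) : Prop :=
  ∀ S : Set A, #S < κ → ∀ x : A, IsLUB S x → IsDistJoin S x

/-- A κ-frame: a κ-complete and κJD meet-semilattice. -/
def IsKappaFrame (A : Type*) [SemilatticeInf A] (κ : Cardinal) : Prop :=
  IsKappaComplete A κ ∧ IsKappaJD A κ

/-- A family of subsets of `α` closed under binary intersections is a
meet-semilattice in the inherited (inclusion) order, meets being intersections. -/
def subSemilatticeInf {α : Type*} (B : Set (Set α))
    (hmeet : ∀ E ∈ B, ∀ F ∈ B, E ∩ F ∈ B) : SemilatticeInf ↥B :=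
  { (inferInstance : PartialOrder ↥B) with
    inf := fun E F => ⟨E.1 ∩ F.1, hmeet _ E.2 _ F.2⟩
    inf_le_left := fun _ _ _ hx => hx.1
    inf_le_right := fun _ _ _ hx => hx.2
    le_inf := fun _ _ _ h1 h2 _ hx => ⟨h1 hx, h2 hx⟩ }

theorem BL_intermediate_aux {A : Type*} [SemilatticeInf A] (B : Set (Set A))
    [inst : SemilatticeInf ↥B]
    (hle : ∀ b c : ↥B, @LE.le ↥B (@Preorder.toLE ↥B (@PartialOrder.toPreorder ↥B
      (@SemilatticeInf.toPartialOrder ↥B inst))) b c ↔ (b : Set A) ⊆ (c : Set A))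
    (hinf : ∀ b c : ↥B, ((b ⊓ c : ↥B) : Set A) = (b : Set A) ∩ (c : Set A))
    (hB : ∀ E ∈ B, IsDIdeal E)
    (hIic : ∀ a : A, Set.Iic a ∈ B) :
    Nonempty ({E : Set ↥B // IsDIdeal E} ≃o {E : Set A // IsDIdeal E}) := by
  classical
  set pr : A → ↥B := fun a => ⟨Set.Iic a, hIic a⟩ with hpr
  have hlow : ∀ b : ↥B, IsLowerSet (b : Set A) := fun b => (hB b.1 b.2).1
  have hcl : ∀ b : ↥B, ∀ S : Set A, S ⊆ (b : Set A) → ∀ x, IsDistJoin S x →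
      x ∈ (b : Set A) := fun b => (hB b.1 b.2).2
  -- Φ maps D-ideals of B to D-ideals of A
  have hΦ : ∀ 𝔈 : Set ↥B, IsDIdeal 𝔈 → IsDIdeal {a : A | pr a ∈ 𝔈} := by
    rintro 𝔈 ⟨hlE, hcE⟩
    constructor
    · intro a a' ha'a ha
      exact hlE ((hle _ _).mpr (Set.Iic_subset_Iic.mpr ha'a)) ha
    · intro S hS x hx
      refine hcE (pr '' S) ?_ (pr x) ⟨?_, ?_⟩
      · rintro _ ⟨s, hs, rfl⟩; exact hS hs
      · constructor
        · rintro _ ⟨s, hs, rfl⟩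
          exact (hle _ _).mpr (Set.Iic_subset_Iic.mpr (hx.1.1 hs))
        · intro c hc
          rw [hle]
          have hxc : x ∈ (c : Set A) := by
            refine hcl c S ?_ x hx
            intro s hs
            exact (hle _ _).mp (hc ⟨s, hs, rfl⟩) (Set.mem_Iic.mpr le_rfl)
          intro y hy
          exact hlow c (Set.mem_Iic.mp hy) hxc
      · intro c
        constructor
        · rintro _ ⟨_, ⟨s, hs, rfl⟩, rfl⟩
          rw [hle, hinf, hinf]
          exact Set.inter_subset_inter_right _
            (Set.Iic_subset_Iic.mpr (hx.1.1 hs))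
        · intro d hd
          rw [hle, hinf]
          rintro y ⟨hyc, hyx⟩
          have hyx' : y ≤ x := Set.mem_Iic.mp hyx
          have hS' : ((fun s => y ⊓ s) '' S) ⊆ (d : Set A) := by
            rintro _ ⟨s, hs, rfl⟩
            have := hd ⟨pr s, ⟨s, hs, rfl⟩, rfl⟩
            have h2 := (hle _ _).mp this
            rw [hinf] at h2
            exact h2 ⟨hlow c inf_le_left hyc, Set.mem_Iic.mpr inf_le_right⟩
          have hdj : IsDistJoin ((fun s => y ⊓ s) '' S) (y ⊓ x) := by
            refine ⟨hx.2 y, ?_⟩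
            intro a
            rw [Set.image_image]
            have h2 := hx.2 (a ⊓ y)
            simp only [inf_assoc] at h2
            exact h2
          have := hcl d _ hS' _ hdj
          rwa [inf_eq_left.mpr hyx'] at this
  -- Ψ maps D-ideals of A to D-ideals of B
  have hΨ : ∀ E : Set A, IsDIdeal E → IsDIdeal {b : ↥B | (b : Set A) ⊆ E} := by
    rintro E ⟨hlE, hcE⟩
    constructor
    · intro b b' hb'b hb
      exact ((hle _ _).mp hb'b).trans hb
    · intro 𝔖 h𝔖 J hJ
      intro x hx
      set S : Set A := {y | (∃ b ∈ 𝔖, y ∈ (b : Set A)) ∧ y ≤ x} with hSdef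
      have hkey : ∀ t : A, t ≤ x → ∀ u : ↥B,
          (∀ b ∈ 𝔖, ((pr t ⊓ b : ↥B) : Set A) ⊆ (u : Set A)) → t ∈ (u : Set A) := by
        intro t ht u hu
        have h2 := hJ.2 (pr t)
        have hub : u ∈ @upperBounds ↥B (@Preorder.toLE ↥B (@PartialOrder.toPreorder ↥B
            (@SemilatticeInf.toPartialOrder ↥B inst))) ((fun s => pr t ⊓ s) '' 𝔖) := by
          rintro _ ⟨b, hb, rfl⟩; exact (hle _ _).mpr (hu b hb)
        have h3 := (hle _ _).mp (h2.2 hub)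
        apply h3
        rw [hinf]
        exact ⟨Set.mem_Iic.mpr le_rfl, hlow J ht hx⟩
      have hSsub : S ⊆ E := by
        rintro y ⟨⟨b, hb, hyb⟩, _⟩
        exact h𝔖 hb hyb
      refine hcE S hSsub x ⟨⟨fun y hy => hy.2, ?_⟩, ?_⟩
      · intro u hu
        have := hkey x le_rfl (pr u) ?_
        · exact Set.mem_Iic.mp this
        · intro b hb
          rw [hinf]
          rintro y ⟨hy1, hy2⟩
          exact Set.mem_Iic.mpr (hu ⟨⟨b, hb, hy2⟩, Set.mem_Iic.mp hy1⟩)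
      · intro a
        constructor
        · rintro _ ⟨y, hy, rfl⟩
          exact inf_le_inf_left a hy.2
        · intro u hu
          have := hkey (a ⊓ x) inf_le_right (pr u) ?_
          · exact Set.mem_Iic.mp this
          · intro b hb
            rw [hinf]
            rintro y ⟨hy1, hy2⟩
            have hy1' : y ≤ a ⊓ x := Set.mem_Iic.mp hy1
            have hyS : y ∈ S := ⟨⟨b, hb, hy2⟩, hy1'.trans inf_le_right⟩
            have h4 : a ⊓ y ≤ u := hu ⟨y, hyS, rfl⟩
            rw [inf_eq_right.mpr (hy1'.trans inf_le_left)] at h4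
            exact Set.mem_Iic.mpr h4
  -- Ψ ∘ Φ = id
  have hΨΦ : ∀ 𝔈 : Set ↥B, IsDIdeal 𝔈 →
      {b : ↥B | (b : Set A) ⊆ {a : A | pr a ∈ 𝔈}} = 𝔈 := by
    rintro 𝔈 ⟨hlE, hcE⟩
    ext b
    simp only [Set.mem_setOf_eq]
    constructor
    · intro h
      refine hcE (pr '' (b : Set A)) ?_ b ⟨⟨?_, ?_⟩, ?_⟩
      · rintro _ ⟨a, ha, rfl⟩; exact h ha
      · rintro _ ⟨a, ha, rfl⟩
        exact (hle _ _).mpr (fun y hy => hlow b (Set.mem_Iic.mp hy) ha)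
      · intro c hc
        rw [hle]
        intro a ha
        exact (hle _ _).mp (hc ⟨a, ha, rfl⟩) (Set.mem_Iic.mpr le_rfl)
      · intro c
        constructor
        · rintro _ ⟨_, ⟨a, ha, rfl⟩, rfl⟩
          exact inf_le_inf_left c
            ((hle _ _).mpr (fun y hy => hlow b (Set.mem_Iic.mp hy) ha))
        · intro d hd
          rw [hle, hinf]
          rintro y ⟨hyc, hyb⟩
          have := hd ⟨pr y, ⟨y, hyb, rfl⟩, rfl⟩
          apply (hle _ _).mp this
          rw [hinf]
          exact ⟨hyc, Set.mem_Iic.mpr le_rfl⟩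
    · intro hb a ha
      exact hlE ((hle _ _).mpr (fun y hy => hlow b (Set.mem_Iic.mp hy) ha)) hb
  -- Φ ∘ Ψ = id
  have hΦΨ : ∀ E : Set A, IsDIdeal E →
      {a : A | (pr a : Set A) ⊆ E} = E := by
    rintro E ⟨hlE, _⟩
    ext a
    simp only [Set.mem_setOf_eq]
    constructor
    · intro h; exact h (Set.mem_Iic.mpr le_rfl)
    · intro ha y hy
      exact hlE (Set.mem_Iic.mp hy) ha
  refine ⟨⟨⟨fun 𝔈 => ⟨{a : A | pr a ∈ 𝔈.1}, hΦ _ 𝔈.2⟩,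
      fun E => ⟨{b : ↥B | (b : Set A) ⊆ E.1}, hΨ _ E.2⟩, ?_, ?_⟩, ?_⟩⟩
  · intro 𝔈
    exact Subtype.ext (hΨΦ _ 𝔈.2)
  · intro E
    exact Subtype.ext (hΦΨ _ E.2)
  · intro 𝔈 𝔈'
    constructor
    · intro h
      have h1 : {b : ↥B | (b : Set A) ⊆ {a : A | pr a ∈ 𝔈.1}} ⊆
          {b : ↥B | (b : Set A) ⊆ {a : A | pr a ∈ 𝔈'.1}} :=
        fun b hb a ha => h (hb ha)
      rw [hΨΦ _ 𝔈.2, hΨΦ _ 𝔈'.2] at h1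
      exact h1
    · intro h a ha
      exact h ha

/-- Let `A` be a meet-semilattice and `B` a sub-meet-semilattice of
the Bruns–Lakser completion `BL A` (a family of D-ideals closed under the meets of
`BL A`, i.e. intersections) containing every principal D-ideal `↓a`. Then the poset
of D-ideals of `B` (the Bruns–Lakser completion of `B`, formed with respect to the
inherited inclusion order) is order-isomorphic to `BL A`. -/
theorem BL_of_intermediate_orderIso (A : Type*) [SemilatticeInf A] [OrderTop A]
    (B : Set (Set A)) (hB : ∀ E ∈ B, IsDIdeal E)
    (hmeet : ∀ E ∈ B, ∀ F ∈ B, E ∩ F ∈ B)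
    (hIic : ∀ a : A, Set.Iic a ∈ B) :
    letI : SemilatticeInf ↥B := subSemilatticeInf B hmeet
    Nonempty ({E : Set ↥B // IsDIdeal E} ≃o {E : Set A // IsDIdeal E}) := by
  letI : SemilatticeInf ↥B := subSemilatticeInf B hmeet
  exact BL_intermediate_aux B (fun _ _ => Iff.rfl) (fun _ _ => rfl) hB hIic
end

section
/- Let A be a meet-semilattice, κ an infinite regular cardinal, and B a sub-meet-semilattice of BL A containing every principal D-ideal ↓a (a ∈ A). The following are equivalent: (1) B, with its inherited order, is a κ-frame; (2) B is a sub-κ-frame of BL A, i.e., B is closed under κ-joins computed in BL A; (3) BL_κ(B) = B. -/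
open Cardinal

section AuxLemmas
variable {A : Type*} [SemilatticeInf A]

lemma dideal_inter {E F : Set A} (hE : IsDIdeal E) (hF : IsDIdeal F) :
    IsDIdeal (E ∩ F) :=
  ⟨hE.1.inter hF.1, fun S hS x hx =>
    ⟨hE.2 S (fun s hs => (hS hs).1) x hx, hF.2 S (fun s hs => (hS hs).2) x hx⟩⟩

lemma dideal_sInter {F : Set (Set A)} (h : ∀ E ∈ F, IsDIdeal E) :
    IsDIdeal (⋂₀ F) := by
  constructor
  · intro a b hba ha E hE
    exact (h E hE).1 hba (ha E hE)
  · intro S hS x hx E hE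
    exact (h E hE).2 S (fun s hs => hS hs E hE) x hx

/-- The canonical BL-join: the least D-ideal containing the union. -/
def blJoin (T : Set (Set A)) : Set A := ⋂₀ {E | IsDIdeal E ∧ ⋃₀ T ⊆ E}

lemma isBLJoin_blJoin (T : Set (Set A)) : IsBLJoin T (blJoin T) := by
  refine ⟨dideal_sInter (fun E hE => hE.1), ?_, ?_⟩
  · intro x hx E hE
    exact hE.2 hx
  · intro E hE hTE
    exact Set.sInter_subset_of_mem ⟨hE, hTE⟩

lemma distJoin_inf {S : Set A} {x : A} (h : IsDistJoin S x) (e : A) :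
    IsDistJoin ((fun s => e ⊓ s) '' S) (e ⊓ x) := by
  refine ⟨h.2 e, fun a => ?_⟩
  have h2 := h.2 (a ⊓ e)
  have himg : (fun s => a ⊓ s) '' ((fun s => e ⊓ s) '' S)
      = (fun s => a ⊓ e ⊓ s) '' S := by
    rw [Set.image_image]
    apply Set.image_congr'
    intro s
    rw [inf_assoc]
  rw [himg, ← inf_assoc]
  exact h2

/-- Frame distributivity of the Bruns–Lakser completion. -/
lemma blJoin_inter {T : Set (Set A)} {J : Set A} (hJ : IsBLJoin T J)
    (hT : ∀ t ∈ T, IsLowerSet t) {E : Set A} (hE : IsDIdeal E) :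
    IsBLJoin ((fun t => E ∩ t) '' T) (E ∩ J) := by
  refine ⟨dideal_inter hE hJ.1, ?_, ?_⟩
  · rintro x ⟨u, ⟨t, ht, rfl⟩, hxu⟩
    exact ⟨hxu.1, hJ.2.1 ⟨t, ht, hxu.2⟩⟩
  · intro K hK hUK
    have hMD : IsDIdeal {x : A | ∀ e ∈ E, e ⊓ x ∈ K} := by
      constructor
      · intro a b hba ha e he
        exact hK.1 (inf_le_inf_left e hba) (ha e he)
      · intro S hS x hx e he
        refine hK.2 _ ?_ _ (distJoin_inf hx e)
        rintro y ⟨s, hs, rfl⟩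
        exact hS hs e he
    have hTM : ⋃₀ T ⊆ {x : A | ∀ e ∈ E, e ⊓ x ∈ K} := by
      rintro x ⟨t, ht, hxt⟩ e he
      exact hUK ⟨E ∩ t, ⟨t, ht, rfl⟩, hE.1 inf_le_left he, (hT t ht) inf_le_right hxt⟩
    have hJM := hJ.2.2 _ hMD hTM
    rintro x ⟨hxE, hxJ⟩
    have := hJM hxJ x hxE
    rwa [inf_idem] at this

end AuxLemmas

/-- Let `A` be a meet-semilattice, `κ` an infinite regular cardinal,
and `B` a sub-meet-semilattice of `BL A` containing every principal D-ideal `↓a`.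
The following are equivalent: (1) `B`, with its inherited order, is a κ-frame;
(2) `B` is closed under κ-joins computed in `BL A`; (3) `BL_κ(B) = B`. -/
theorem subKappaFrame_tfae (A : Type*) [SemilatticeInf A] [OrderTop A]
    (κ : Cardinal) (hκ : κ.IsRegular)
    (B : Set (Set A)) (hB : ∀ E ∈ B, IsDIdeal E)
    (hmeet : ∀ E ∈ B, ∀ F ∈ B, E ∩ F ∈ B)
    (hIic : ∀ a : A, Set.Iic a ∈ B) :
    letI : SemilatticeInf ↥B := subSemilatticeInf B hmeet
    ((IsKappaFrame ↥B κ ↔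
        ∀ T : Set (Set A), T ⊆ B → #T < κ → ∀ J : Set A, IsBLJoin T J → J ∈ B) ∧
      ((∀ T : Set (Set A), T ⊆ B → #T < κ → ∀ J : Set A, IsBLJoin T J → J ∈ B) ↔
        BLKappa κ B = B)) := by
  letI : SemilatticeInf ↥B := subSemilatticeInf B hmeet
  have hUnivB : (Set.univ : Set A) ∈ B := by
    have h : Set.Iic (⊤ : A) = Set.univ := by
      ext y; simp
    rw [← h]; exact hIic ⊤
  constructor
  · constructor
    · -- (1) → (2)
      rintro ⟨hcomp, hJD⟩ T hTB hTκ J hJ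
      set S : Set ↥B := Subtype.val ⁻¹' T with hSdef
      have hSκ : #S < κ :=
        lt_of_le_of_lt (Cardinal.mk_preimage_of_injective _ _ Subtype.val_injective) hTκ
      obtain ⟨X, hX⟩ := hcomp S hSκ
      have hsub : ∀ t ∈ T, t ⊆ (X : Set A) := fun t ht =>
        hX.1 (show (⟨t, hTB ht⟩ : ↥B) ∈ S from ht)
      have hJX : J ⊆ (X : Set A) := by
        refine hJ.2.2 _ (hB _ X.2) ?_
        rintro x ⟨t, ht, hxt⟩
        exact hsub t ht hxt
      have hXJ : (X : Set A) ⊆ J := by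
        intro x hxX
        have hdist := hJD S hSκ X hX
        set E : ↥B := ⟨Set.Iic x, hIic x⟩ with hEdef
        have hEX : (E ⊓ X : ↥B).1 = Set.Iic x := by
          show Set.Iic x ∩ (X : Set A) = Set.Iic x
          exact Set.inter_eq_left.2 (fun y hy => (hB _ X.2).1 hy hxX)
        have hLx : IsLUB ((fun s => E ⊓ s) '' S) (E ⊓ X) := hdist.2 E
        have hS1κ : #((fun s => E ⊓ s) '' S) < κ :=
          lt_of_le_of_lt Cardinal.mk_image_le hSκ
        have hdist1 := hJD _ hS1κ _ hLx
        set Dx : Set A := Set.Iic x ∩ ⋃₀ T with hDdef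
        have hDJ : Dx ⊆ J := Set.inter_subset_right.trans hJ.2.1
        refine hJ.1.2 Dx hDJ x ⟨⟨?_, ?_⟩, fun a => ⟨?_, ?_⟩⟩
        · rintro y ⟨hyx, _⟩
          exact hyx
        · intro u hu
          have hub : (⟨Set.Iic (x ⊓ u), hIic _⟩ : ↥B) ∈
              upperBounds ((fun s => E ⊓ s) '' S) := by
            rintro y ⟨s, hs, rfl⟩
            show Set.Iic x ∩ (s : Set A) ⊆ Set.Iic (x ⊓ u)
            rintro z ⟨hzx, hzs⟩
            exact le_inf hzx (hu ⟨hzx, ⟨s.1, hs, hzs⟩⟩)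
          have hle : E ⊓ X ≤ ⟨Set.Iic (x ⊓ u), hIic _⟩ := hLx.2 hub
          have hx' : x ∈ (E ⊓ X : ↥B).1 := by
            rw [hEX]; exact Set.self_mem_Iic
          exact (hle hx' : x ≤ x ⊓ u).trans inf_le_right
        · rintro y ⟨z, ⟨hzx, hzT⟩, rfl⟩
          exact inf_le_inf_left a hzx
        · intro u hu
          set F : ↥B := ⟨Set.Iic a, hIic a⟩ with hFdef
          have hL2 : IsLUB ((fun s => F ⊓ s) '' ((fun s => E ⊓ s) '' S))
              (F ⊓ (E ⊓ X)) := hdist1.2 F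
          have hub : (⟨Set.Iic (a ⊓ x ⊓ u), hIic _⟩ : ↥B) ∈
              upperBounds ((fun s => F ⊓ s) '' ((fun s => E ⊓ s) '' S)) := by
            rintro y ⟨w, ⟨s, hs, rfl⟩, rfl⟩
            show Set.Iic a ∩ (Set.Iic x ∩ (s : Set A)) ⊆ Set.Iic (a ⊓ x ⊓ u)
            rintro z ⟨hza, hzx, hzs⟩
            have hzD : z ∈ Dx := ⟨hzx, ⟨s.1, hs, hzs⟩⟩
            have hau : a ⊓ z ≤ u := hu ⟨z, hzD, rfl⟩
            have hz_u : z ≤ u := le_trans (le_inf hza le_rfl) hau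
            exact le_inf (le_inf hza hzx) hz_u
          have hle := hL2.2 hub
          have hmem : a ⊓ x ∈ (F ⊓ (E ⊓ X) : ↥B).1 := by
            show a ⊓ x ∈ Set.Iic a ∩ (E ⊓ X : ↥B).1
            rw [hEX]
            exact ⟨inf_le_left, inf_le_right⟩
          exact (hle hmem : a ⊓ x ≤ a ⊓ x ⊓ u).trans inf_le_right
      have : J = (X : Set A) := Set.Subset.antisymm hJX hXJ
      rw [this]; exact X.2
    · -- (2) → (1)
      intro h2
      constructor
      · -- κ-complete
        intro S hSκ
        set T : Set (Set A) := Subtype.val '' S with hTdef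
        have hTB : T ⊆ B := by rintro t ⟨s, hs, rfl⟩; exact s.2
        have hTκ : #T < κ := lt_of_le_of_lt Cardinal.mk_image_le hSκ
        have hJ := isBLJoin_blJoin T
        have hJB : blJoin T ∈ B := h2 T hTB hTκ _ hJ
        refine ⟨⟨blJoin T, hJB⟩, ?_, ?_⟩
        · intro s hs
          show (s : Set A) ⊆ blJoin T
          exact (Set.subset_sUnion_of_mem (show (s : Set A) ∈ T from ⟨s, hs, rfl⟩)).trans hJ.2.1
        · intro Z hZ
          show blJoin T ⊆ (Z : Set A)
          refine hJ.2.2 _ (hB _ Z.2) ?_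
          rintro x ⟨t, ⟨s, hs, rfl⟩, hxt⟩
          exact hZ hs hxt
      · -- κJD
        intro S hSκ X hX
        set T : Set (Set A) := Subtype.val '' S with hTdef
        have hTB : T ⊆ B := by rintro t ⟨s, hs, rfl⟩; exact s.2
        have hTlow : ∀ t ∈ T, IsLowerSet t := fun t ht => (hB t (hTB ht)).1
        have hTκ : #T < κ := lt_of_le_of_lt Cardinal.mk_image_le hSκ
        have hJ := isBLJoin_blJoin T
        have hJB : blJoin T ∈ B := h2 T hTB hTκ _ hJ
        have hXJ : (X : Set A) = blJoin T := by
          apply Set.Subset.antisymm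
          · have hub : (⟨blJoin T, hJB⟩ : ↥B) ∈ upperBounds S := by
              intro s hs
              show (s : Set A) ⊆ blJoin T
              exact (Set.subset_sUnion_of_mem (show (s : Set A) ∈ T from ⟨s, hs, rfl⟩)).trans hJ.2.1
            exact hX.2 hub
          · refine hJ.2.2 _ (hB _ X.2) ?_
            rintro x ⟨t, ⟨s, hs, rfl⟩, hxt⟩
            exact hX.1 hs hxt
        refine ⟨hX, fun E => ?_⟩
        have hEJ := blJoin_inter hJ hTlow (hB E.1 E.2)
        constructor
        · rintro y ⟨s, hs, rfl⟩
          show (E.1 ∩ s.1 : Set A) ⊆ E.1 ∩ (X : Set A)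
          exact Set.inter_subset_inter_right _ (hX.1 hs)
        · intro Z hZ
          show (E.1 ∩ (X : Set A) : Set A) ⊆ Z.1
          rw [hXJ]
          refine hEJ.2.2 _ (hB _ Z.2) ?_
          rintro x ⟨u, ⟨t, ⟨s, hs, rfl⟩, rfl⟩, hxu⟩
          exact hZ ⟨s, hs, rfl⟩ hxu
  · constructor
    · -- (2) → (3)
      intro h2
      apply Set.Subset.antisymm
      · exact Set.sInter_subset_of_mem
          ⟨Set.Subset.rfl, fun E hE => hB E hE, hUnivB, hmeet, h2⟩
      · intro E hE
        rw [BLKappa, Set.mem_sInter]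
        intro C hC
        exact hC.1 hE
    · -- (3) → (2)
      intro h3 T hTB hTκ J hJ
      rw [← h3, BLKappa, Set.mem_sInter]
      intro C hC
      exact hC.2.2.2.2 T (hTB.trans hC.1) hTκ J hJ
end

section
/- Let A be a meet-semilattice and B a sub-meet-semilattice of BL A containing every principal D-ideal ↓a (a ∈ A). For a,b ∈ A let ⟨a,b⟩_A = {x ∈ A : a ⊓ x ≤ b}, and let ⟨a,b⟩_B = {y ∈ B : ↓a ∩ y ⊆ ↓b} (the relative annihilator of ↓a, ↓b in B, whose meets are intersections). Then the assignment ⟨a,b⟩_A ↦ ⟨a,b⟩_B is well defined and is an order embedding of the poset of relative annihilators of A (ordered by inclusion) into the poset of relative annihilators of B: for all a,b,c,d ∈ A, ⟨a,b⟩_A ⊆ ⟨c,d⟩_A if and only if ⟨a,b⟩_B ⊆ ⟨c,d⟩_B. -/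
open Cardinal

/-- Let `A` be a meet-semilattice and `B` a sub-meet-semilattice of
`BL A` containing every principal D-ideal `↓a`. For `a, b ∈ A` the relative
annihilator of `↓a`, `↓b` in `B` is `⟨a,b⟩_B = {y ∈ B : ↓a ∩ y ⊆ ↓b}` (meets in `B`
are intersections). Then `⟨a,b⟩_A ↦ ⟨a,b⟩_B` is well defined and an order embedding:
`⟨a,b⟩_A ⊆ ⟨c,d⟩_A` iff `⟨a,b⟩_B ⊆ ⟨c,d⟩_B`. -/
theorem relAnn_orderEmbedding (A : Type*) [SemilatticeInf A] [OrderTop A]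
    (B : Set (Set A)) (hB : ∀ E ∈ B, IsDIdeal E)
    (hmeet : ∀ E ∈ B, ∀ F ∈ B, E ∩ F ∈ B)
    (hIic : ∀ a : A, Set.Iic a ∈ B)
    (a b c d : A) :
    RelAnn a b ⊆ RelAnn c d ↔
      {y ∈ B | Set.Iic a ∩ y ⊆ Set.Iic b} ⊆ {y ∈ B | Set.Iic c ∩ y ⊆ Set.Iic d} := by
  constructor
  · rintro h y ⟨hyB, hy⟩
    refine ⟨hyB, fun z ⟨hzc, hzy⟩ => ?_⟩
    have hdown := (hB y hyB).1
    have haz : a ⊓ z ∈ y := hdown inf_le_right hzy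
    have hab : a ⊓ z ≤ b := hy ⟨inf_le_left, haz⟩
    have := h hab
    calc z = c ⊓ z := (inf_eq_right.mpr hzc).symm
      _ ≤ d := this
  · intro h x hx
    have hy : Set.Iic x ∈ {y ∈ B | Set.Iic a ∩ y ⊆ Set.Iic b} :=
      ⟨hIic x, fun z ⟨hza, hzx⟩ => le_trans (le_inf hza hzx) hx⟩
    exact (h hy).2 ⟨inf_le_left, inf_le_right⟩
end

section
/- For a meet-semilattice A, the following are equivalent: (1) A is proHeyting, i.e., every relative annihilator of A is a normal ideal of A; (2) every D-ideal of the complete lattice DM A (the normal ideals of A ordered by inclusion, with finite meets given by intersections) is a principal downset of DM A; (3) every relative annihilator of the complete lattice DM A is a principal downset of DM A. -/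
open Cardinal

theorem isNormalIdeal_inter {A : Type*} [SemilatticeInf A] {N M : Set A}
    (hN : IsNormalIdeal N) (hM : IsNormalIdeal M) : IsNormalIdeal (N ∩ M) := by
  refine ⟨hN.1.inter hM.1, subset_antisymm (fun x hx u hu => hu hx) fun x hx => ?_⟩
  constructor
  · have : x ∈ lowerBounds (upperBounds N) := fun u hu =>
      hx (upperBounds_mono_set Set.inter_subset_left hu)
    rwa [← hN.2] at this
  · have : x ∈ lowerBounds (upperBounds M) := fun u hu =>
      hx (upperBounds_mono_set Set.inter_subset_right hu)
    rwa [← hM.2] at this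

/-- The Dedekind–MacNeille completion `DM A`: the normal ideals of `A` ordered by
inclusion. -/
abbrev DM (A : Type*) [SemilatticeInf A] := {N : Set A // IsNormalIdeal N}

/-- `DM A` is a meet-semilattice, with finite meets given by intersections. -/
instance (A : Type*) [SemilatticeInf A] : SemilatticeInf (DM A) :=
  { (inferInstance : PartialOrder (DM A)) with
    inf := fun N M => ⟨N.1 ∩ M.1, isNormalIdeal_inter N.2 M.2⟩
    inf_le_left := fun _ _ _ hx => hx.1
    inf_le_right := fun _ _ _ hx => hx.2
    le_inf := fun _ _ _ h1 h2 _ hx => ⟨h1 hx, h2 hx⟩ }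

section Aux

variable {A : Type*} [SemilatticeInf A]

lemma subset_ul_closure (S : Set A) : S ⊆ lowerBounds (upperBounds S) :=
  fun _ hx _ hu => hu hx

lemma normal_closure_subset {S N : Set A} (hN : IsNormalIdeal N) (h : S ⊆ N) :
    lowerBounds (upperBounds S) ⊆ N := by
  intro x hx
  rw [hN.2]
  exact fun u hu => hx (upperBounds_mono_set h hu)

lemma isNormalIdeal_closure (S : Set A) :
    IsNormalIdeal (lowerBounds (upperBounds S)) := by
  refine ⟨fun a b hab ha u hu => le_trans hab (ha hu), ?_⟩
  refine subset_antisymm (subset_ul_closure _) ?_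
  intro x hx u hu
  exact hx fun y hy => hy hu

lemma proHeyting_imp_principal (h : ∀ a b : A, IsNormalIdeal (RelAnn a b)) :
    ∀ E : Set (DM A), IsDIdeal E → ∃ N : DM A, E = Set.Iic N := by
  intro E hE
  set U : Set A := ⋃ X ∈ E, (X : DM A).1 with hU
  refine ⟨⟨lowerBounds (upperBounds U), isNormalIdeal_closure U⟩, ?_⟩
  set N : DM A := ⟨lowerBounds (upperBounds U), isNormalIdeal_closure U⟩ with hNdef
  have hub : ∀ X ∈ E, X ≤ N := by
    intro X hX
    exact fun x hx => subset_ul_closure U (Set.mem_biUnion hX hx)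
  have hlub : IsLUB E N := by
    refine ⟨hub, fun Y hY => ?_⟩
    refine normal_closure_subset Y.2 ?_
    intro u hu
    obtain ⟨X, hX, huX⟩ := Set.mem_iUnion₂.mp hu
    exact hY hX huX
  have hdist : ∀ M : DM A, IsLUB ((fun s => M ⊓ s) '' E) (M ⊓ N) := by
    intro M
    constructor
    · rintro Z ⟨X, hX, rfl⟩
      exact inf_le_inf_left M (hub X hX)
    · intro Y hY
      intro x hx
      obtain ⟨hxM, hxN⟩ := hx
      have hY2 := Y.2.2
      rw [hY2]
      intro c hc
      have hUsub : U ⊆ RelAnn x c := by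
        intro u hu
        obtain ⟨X, hX, huX⟩ := Set.mem_iUnion₂.mp hu
        have h1 : x ⊓ u ∈ M.1 := M.2.1 inf_le_left hxM
        have h2 : x ⊓ u ∈ X.1 := X.2.1 inf_le_right huX
        have hMXY : M ⊓ X ≤ Y := hY (Set.mem_image_of_mem _ hX)
        have : x ⊓ u ∈ Y.1 := hMXY ⟨h1, h2⟩
        exact hc this
      have hx' : x ∈ RelAnn x c :=
        normal_closure_subset (h x c) hUsub hxN
      simpa [RelAnn] using hx'
  have hNE : N ∈ E := hE.2 E subset_rfl N ⟨hlub, hdist⟩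
  ext X
  exact ⟨fun hX => hub X hX, fun hX => hE.1 hX hNE⟩

lemma principal_imp_relAnn
    (h : ∀ E : Set (DM A), IsDIdeal E → ∃ N : DM A, E = Set.Iic N) :
    ∀ N M : DM A, ∃ K : DM A, RelAnn N M = Set.Iic K := by
  intro N M
  refine h (RelAnn N M) ⟨?_, ?_⟩
  · intro a b hba ha
    exact le_trans (inf_le_inf_left N hba) ha
  · intro S hS x hx
    refine (hx.2 N).2 ?_
    rintro z ⟨s, hs, rfl⟩
    exact hS hs

lemma isNormalIdeal_Iic (a : A) : IsNormalIdeal (Set.Iic a) := by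
  refine ⟨fun x y hyx hx => le_trans hyx hx, ?_⟩
  refine subset_antisymm (subset_ul_closure _) ?_
  intro x hx
  exact hx fun y hy => hy

lemma relAnn_imp_proHeyting
    (h : ∀ N M : DM A, ∃ K : DM A, RelAnn N M = Set.Iic K) :
    ∀ a b : A, IsNormalIdeal (RelAnn a b) := by
  intro a b
  obtain ⟨K, hK⟩ := h ⟨Set.Iic a, isNormalIdeal_Iic a⟩ ⟨Set.Iic b, isNormalIdeal_Iic b⟩
  have key : RelAnn a b = K.1 := by
    ext x
    constructor
    · intro hx
      have hmem : (⟨Set.Iic x, isNormalIdeal_Iic x⟩ : DM A) ∈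
          RelAnn (⟨Set.Iic a, isNormalIdeal_Iic a⟩ : DM A)
            ⟨Set.Iic b, isNormalIdeal_Iic b⟩ := by
        intro y hy
        exact le_trans (le_inf hy.1 hy.2) hx
      rw [hK] at hmem
      exact hmem (le_refl x)
    · intro hx
      have hmem : (⟨Set.Iic x, isNormalIdeal_Iic x⟩ : DM A) ∈ Set.Iic K := by
        intro y hy
        exact K.2.1 hy hx
      rw [← hK] at hmem
      exact hmem ⟨inf_le_left, inf_le_right⟩
  rw [key]
  exact K.2

end Aux

/-- For a meet-semilattice `A`, the following are equivalent:
(1) `A` is proHeyting: every relative annihilator of `A` is a normal ideal of `A`;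
(2) every D-ideal of the complete lattice `DM A` is a principal downset of `DM A`;
(3) every relative annihilator of `DM A` is a principal downset of `DM A`. -/
theorem proHeyting_tfae (A : Type*) [SemilatticeInf A] [OrderTop A] :
    ((∀ a b : A, IsNormalIdeal (RelAnn a b)) ↔
      (∀ E : Set (DM A), IsDIdeal E → ∃ N : DM A, E = Set.Iic N)) ∧
    ((∀ E : Set (DM A), IsDIdeal E → ∃ N : DM A, E = Set.Iic N) ↔
      (∀ N M : DM A, ∃ K : DM A, RelAnn N M = Set.Iic K)) := by
  refine ⟨⟨proHeyting_imp_principal, fun h2 => relAnn_imp_proHeyting (principal_imp_relAnn h2)⟩,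
    ⟨principal_imp_relAnn, fun h3 => proHeyting_imp_principal (relAnn_imp_proHeyting h3)⟩⟩
end

section
/- Let A be a meet-semilattice and κ an infinite regular cardinal. Then A is a κ-frame if and only if BL_κ A = {↓a : a ∈ A}, i.e., the sub-κ-frame of BL A generated by the principal D-ideals consists exactly of the principal D-ideals. -/
open Cardinal

section Aux

variable {A : Type*} [SemilatticeInf A]

lemma isDIdeal_Iic (a : A) : IsDIdeal (Set.Iic a) := by
  refine ⟨fun x y hyx hx => le_trans hyx hx, ?_⟩
  intro S hS x hx
  exact hx.1.2 fun s hs => hS hs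

lemma isDIdeal_relAnn (a b : A) : IsDIdeal (RelAnn a b) := by
  refine ⟨fun x y hyx hx => le_trans (inf_le_inf_left a hyx) hx, ?_⟩
  intro S hS x hx
  exact (hx.2 a).2 (by rintro _ ⟨s, hs, rfl⟩; exact hS hs)

lemma exists_isBLJoin (T : Set (Set A)) : ∃ J : Set A, IsBLJoin T J := by
  refine ⟨⋂₀ {E : Set A | IsDIdeal E ∧ ⋃₀ T ⊆ E}, ⟨?_, ?_⟩, ?_, ?_⟩
  · intro x y hyx hx E hE
    exact hE.1.1 hyx (hx E hE)
  · intro S hS x hx E hE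
    exact hE.1.2 S (fun s hs => hS hs E hE) x hx
  · intro x hx E hE
    exact hE.2 hx
  · intro E hE1 hE2 x hx
    exact hx E ⟨hE1, hE2⟩

lemma key_of_BLKappa_eq (κ : Cardinal)
    (heq : BLKappa κ (Set.range (Set.Iic : A → Set A)) = Set.range (Set.Iic : A → Set A))
    (S : Set A) (hS : #S < κ) : ∃ x : A, IsLUB S x ∧ IsDistJoin S x := by
  set T : Set (Set A) := Set.Iic '' S with hT
  obtain ⟨J, hJ⟩ := exists_isBLJoin T
  have hJmem : J ∈ BLKappa κ (Set.range (Set.Iic : A → Set A)) := by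
    intro C hC
    refine hC.2.2.2.2 T ?_ (lt_of_le_of_lt Cardinal.mk_image_le hS) J hJ
    rintro _ ⟨s, _, rfl⟩
    exact hC.1 ⟨s, rfl⟩
  rw [heq] at hJmem
  obtain ⟨x, hx⟩ := hJmem
  have hub : ∀ s ∈ S, s ≤ x := by
    intro s hs
    have : s ∈ J := hJ.2.1 ⟨Set.Iic s, ⟨s, hs, rfl⟩, le_refl s⟩
    rwa [← hx] at this
  have hxJ : x ∈ J := by rw [← hx]; exact le_refl x
  have hlub : IsLUB S x := by
    refine ⟨hub, ?_⟩
    intro b hb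
    have : J ⊆ Set.Iic b := by
      refine hJ.2.2 _ (isDIdeal_Iic b) ?_
      rintro z ⟨_, ⟨s, hs, rfl⟩, hz⟩
      exact le_trans hz (hb hs)
    exact this hxJ
  refine ⟨x, hlub, hlub, fun a => ⟨?_, ?_⟩⟩
  · rintro _ ⟨s, hs, rfl⟩
    exact inf_le_inf_left a (hub s hs)
  · intro b hb
    have : J ⊆ RelAnn a b := by
      refine hJ.2.2 _ (isDIdeal_relAnn a b) ?_
      rintro z ⟨_, ⟨s, hs, rfl⟩, hz⟩
      exact le_trans (inf_le_inf_left a hz) (hb ⟨s, hs, rfl⟩)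
    exact this hxJ

end Aux

/-- A meet-semilattice `A` is a κ-frame iff the sub-κ-frame of
`BL A` generated by the principal D-ideals consists exactly of the principal
D-ideals: `BL_κ A = {↓a : a ∈ A}`. -/
theorem isKappaFrame_iff_BLKappa_eq_principal (A : Type*) [SemilatticeInf A] [OrderTop A]
    (κ : Cardinal) (hκ : κ.IsRegular) :
    IsKappaFrame A κ ↔
      BLKappa κ (Set.range (Set.Iic : A → Set A)) = Set.range (Set.Iic : A → Set A) := by
  constructor
  · intro h
    apply subset_antisymm
    · apply Set.sInter_subset_of_mem
      refine ⟨subset_rfl, ?_, ?_, ?_, ?_⟩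
      · rintro _ ⟨a, rfl⟩; exact isDIdeal_Iic a
      · exact ⟨⊤, Set.Iic_top⟩
      · rintro _ ⟨a, rfl⟩ _ ⟨b, rfl⟩
        exact ⟨a ⊓ b, Set.Iic_inter_Iic.symm⟩
      · intro T hT hTκ J hJ
        set S : Set A := {a : A | Set.Iic a ∈ T} with hSdef
        have hScard : #S < κ := by
          refine lt_of_le_of_lt (Cardinal.mk_le_of_injective
            (f := fun a : S => (⟨Set.Iic a.1, a.2⟩ : T)) ?_) hTκ
          intro a b hab
          exact Subtype.ext (Set.Iic_injective (congrArg Subtype.val hab))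
        obtain ⟨x, hx⟩ := h.1 S hScard
        have hdist : IsDistJoin S x := h.2 S hScard x hx
        have hSJ : S ⊆ J := fun a ha => hJ.2.1 ⟨Set.Iic a, ha, le_refl a⟩
        have hxJ : x ∈ J := hJ.1.2 S hSJ x hdist
        have h1 : Set.Iic x ⊆ J := fun z hz => hJ.1.1 hz hxJ
        have h2 : J ⊆ Set.Iic x := by
          refine hJ.2.2 _ (isDIdeal_Iic x) ?_
          rintro z ⟨E, hE, hz⟩
          obtain ⟨a, rfl⟩ := hT hE
          exact le_trans hz (hx.1 hE)
        exact ⟨x, subset_antisymm h1 h2⟩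
    · intro E hE C hC
      exact hC.1 hE
  · intro heq
    constructor
    · intro S hS
      obtain ⟨x, hx, _⟩ := key_of_BLKappa_eq κ heq S hS
      exact ⟨x, hx⟩
    · intro S hS x hx
      obtain ⟨x', hx', hd⟩ := key_of_BLKappa_eq κ heq S hS
      rwa [hx.unique hx']
end

section
/- Let A be a bounded distributive lattice and κ an infinite regular cardinal. If A is κ-proHeyting, i.e., BL_κ(DM A) = DM A, then A is κJD: every existing κ-join in A is a distributive join. -/
open Cardinal

/-- If a bounded distributive lattice `A` is κ-proHeyting, i.e.
`BL_κ(DM A) = DM A`, then `A` is κJD: every existing κ-join in `A` is distributive. -/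
theorem kappaProHeyting_isKappaJD (A : Type*) [DistribLattice A] [BoundedOrder A]
    (κ : Cardinal) (hκ : κ.IsRegular)
    (h : BLKappa κ {N : Set A | IsNormalIdeal N} = {N : Set A | IsNormalIdeal N}) :
    IsKappaJD A κ := by
  intro S hS x hx
  set T : Set (Set A) := (fun s => Set.Iic s) '' S with hT
  set J : Set A := ⋂₀ {E : Set A | IsDIdeal E ∧ ⋃₀ T ⊆ E} with hJ
  have hJDI : IsDIdeal J := by
    constructor
    · intro u v huv hv E hE
      exact hE.1.1 huv (hv E hE)
    · intro S' hS' y hy E hE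
      exact hE.1.2 S' (fun z hz => hS' hz E hE) y hy
  have hJub : ⋃₀ T ⊆ J := fun z hz E hE => hE.2 hz
  have hBL : IsBLJoin T J :=
    ⟨hJDI, hJub, fun E hE hE2 => Set.sInter_subset_of_mem ⟨hE, hE2⟩⟩
  have hTcard : #T < κ := lt_of_le_of_lt Cardinal.mk_image_le hS
  have hTnorm : T ⊆ {N : Set A | IsNormalIdeal N} := by
    rintro _ ⟨s, hs, rfl⟩
    refine ⟨fun u v huv hv => le_trans huv hv, ?_⟩
    ext y
    constructor
    · intro hy u hu
      exact le_trans hy (hu (le_refl s))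
    · intro hy
      exact hy (fun z hz => hz)
  have hJmem : J ∈ BLKappa κ {N : Set A | IsNormalIdeal N} := by
    intro C hC
    have hTC : T ⊆ C := fun E hE => hC.1 (hTnorm hE)
    exact hC.2.2.2.2 T hTC hTcard J hBL
  have hJnorm : IsNormalIdeal J := by rw [h] at hJmem; exact hJmem
  have hSJ : S ⊆ J := fun s hs => hJub ⟨Set.Iic s, ⟨s, hs, rfl⟩, le_refl s⟩
  have hxJ : x ∈ J := by
    rw [hJnorm.2]
    intro u hu
    exact hx.2 (fun s hs => hu (hSJ hs))
  refine ⟨hx, fun a => ⟨?_, ?_⟩⟩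
  · rintro _ ⟨s, hs, rfl⟩
    exact inf_le_inf_left a (hx.1 hs)
  · intro b hb
    have hE : IsDIdeal (RelAnn a b) := by
      constructor
      · intro u v huv hv
        exact le_trans (inf_le_inf_left a huv) hv
      · intro S' hS' y hy
        refine (hy.2 a).2 ?_
        rintro _ ⟨s', hs', rfl⟩
        exact hS' hs'
    have hsub : ⋃₀ T ⊆ RelAnn a b := by
      rintro z ⟨_, ⟨s, hs, rfl⟩, hz⟩
      exact le_trans (inf_le_inf_left a hz) (hb ⟨s, hs, rfl⟩)
    exact hBL.2.2 (RelAnn a b) hE hsub hxJ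
end

section
/- Let A be a bounded distributive lattice and κ an infinite regular cardinal. Then every relative annihilator of A belongs to BL_κ A ∩ DM A (i.e., every relative annihilator is a normal ideal of A lying in the sub-κ-frame of BL A generated by the principal D-ideals) if and only if pH A ⊆ BL_κ A ∩ DM A. -/
open Cardinal

/-- The closure conditions defining the proHeyting extension inside `BL A`:
containing every relative annihilator, the top and bottom of `BL A`, and closed
under binary meets (intersections) and binary joins of `BL A`. -/
def PHClosed {A : Type*} [SemilatticeInf A] (C : Set (Set A)) : Prop :=
  (∀ a b : A, RelAnn a b ∈ C) ∧
  Set.univ ∈ C ∧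
  (∀ J : Set A, IsBLJoin (∅ : Set (Set A)) J → J ∈ C) ∧
  (∀ E ∈ C, ∀ F ∈ C, E ∩ F ∈ C) ∧
  (∀ E ∈ C, ∀ F ∈ C, ∀ J : Set A, IsBLJoin {E, F} J → J ∈ C)

/-- The proHeyting extension `pH A`: the bounded sublattice of `BL A` generated by
the relative annihilators of `A`. -/
def pHExt (A : Type*) [SemilatticeInf A] : Set (Set A) :=
  ⋂₀ {C : Set (Set A) | C ⊆ {E : Set A | IsDIdeal E} ∧ PHClosed C}

theorem pHExt_inter_mem {A : Type*} [SemilatticeInf A] :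
    ∀ E ∈ pHExt A, ∀ F ∈ pHExt A, E ∩ F ∈ pHExt A := by
  intro E hE F hF
  rw [pHExt, Set.mem_sInter] at hE hF ⊢
  intro C hC
  exact hC.2.2.2.2.1 E (hE C hC) F (hF C hC)

/-- `pH A` with its inherited order is a meet-semilattice. -/
instance pHExtSemilatticeInf (A : Type*) [SemilatticeInf A] :
    SemilatticeInf ↥(pHExt A) :=
  subSemilatticeInf (pHExt A) pHExt_inter_mem

/-!
If every relative annihilator is a normal ideal, then joins in `BL A` are joins in `DM A`:
an element `x` of `(⋃ T)ᵘˡ` is the distributive join of `x ⊓ (⋃ T)`, because for every `c`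
and every upper bound `u` of `c ⊓ x ⊓ (⋃ T)` the normal ideal `⟨c ⊓ x, u⟩` contains `⋃ T`,
hence contains `x`. So `BL_κ A ∩ DM A` contains the relative annihilators, the top and the
bottom of `BL A`, and is closed under intersections and finite joins of `BL A`; by minimality
it contains `pH A`.
-/

section NormalIdeal

variable {A : Type*} [SemilatticeInf A]

lemma IsNormalIdeal.lowerBounds_upperBounds_subset {N M : Set A} (hN : IsNormalIdeal N)
    (hMN : M ⊆ N) : lowerBounds (upperBounds M) ⊆ N := by
  rw [hN.2]
  exact lowerBounds_mono_set (upperBounds_mono_set hMN)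

lemma IsNormalIdeal.isDIdeal {N : Set A} (hN : IsNormalIdeal N) : IsDIdeal N :=
  ⟨hN.1, fun _ hS _ hx => hN.lowerBounds_upperBounds_subset hS fun _ hu => hx.1.2 hu⟩

lemma isNormalIdeal_lowerBounds_upperBounds (M : Set A) :
    IsNormalIdeal (lowerBounds (upperBounds M)) := by
  have hub : upperBounds (lowerBounds (upperBounds M)) = upperBounds M :=
    (upperBounds_mono_set (subset_lowerBounds_upperBounds M)).antisymm
      fun _ hu _ hx => hx hu
  exact ⟨fun _ _ hyx hx _ hu => hyx.trans (hx hu), by rw [hub]⟩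

lemma isNormalIdeal_univ : IsNormalIdeal (Set.univ : Set A) :=
  ⟨isLowerSet_univ, (Set.subset_univ _).antisymm' fun _ _ _ hu => hu trivial⟩

lemma IsNormalIdeal.inter {N M : Set A} (hN : IsNormalIdeal N) (hM : IsNormalIdeal M) :
    IsNormalIdeal (N ∩ M) :=
  ⟨hN.1.inter hM.1, (subset_lowerBounds_upperBounds _).antisymm fun _ hx =>
    ⟨hN.lowerBounds_upperBounds_subset Set.inter_subset_left hx,
      hM.lowerBounds_upperBounds_subset Set.inter_subset_right hx⟩⟩

lemma inf_le_of_relAnn_normal (hRel : ∀ a b : A, IsNormalIdeal (RelAnn a b)) {M : Set A}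
    {x c u : A} (hx : x ∈ lowerBounds (upperBounds M)) (hu : ∀ m ∈ M, c ⊓ m ≤ u) :
    c ⊓ x ≤ u :=
  (hRel c u).lowerBounds_upperBounds_subset hu hx

lemma isDistJoin_image_inf (hRel : ∀ a b : A, IsNormalIdeal (RelAnn a b)) {M : Set A} {x : A}
    (hx : x ∈ lowerBounds (upperBounds M)) : IsDistJoin ((x ⊓ ·) '' M) x := by
  refine ⟨⟨?_, fun u hu => ?_⟩, fun a => ⟨?_, fun u hu => ?_⟩⟩
  · rintro _ ⟨m, -, rfl⟩
    exact inf_le_left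
  · simpa using inf_le_of_relAnn_normal hRel hx fun m hm => hu ⟨m, hm, rfl⟩
  · rintro _ ⟨_, ⟨m, -, rfl⟩, rfl⟩
    exact inf_le_inf_left a inf_le_left
  · simpa [inf_assoc] using inf_le_of_relAnn_normal (c := a ⊓ x) hRel hx
      fun m hm => by simpa [inf_assoc] using hu ⟨x ⊓ m, ⟨m, hm, rfl⟩, rfl⟩

lemma IsBLJoin.eq_lowerBounds_upperBounds (hRel : ∀ a b : A, IsNormalIdeal (RelAnn a b))
    {T : Set (Set A)} {J : Set A} (hJ : IsBLJoin T J) :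
    J = lowerBounds (upperBounds (⋃₀ T)) := by
  refine (hJ.2.2 _ (isNormalIdeal_lowerBounds_upperBounds _).isDIdeal
    (subset_lowerBounds_upperBounds _)).antisymm fun x hx => ?_
  refine hJ.1.2 _ ?_ x (isDistJoin_image_inf hRel hx)
  rintro _ ⟨m, hm, rfl⟩
  exact hJ.1.1 inf_le_right (hJ.2.1 hm)

end NormalIdeal

section BLKappa

variable {A : Type*} [SemilatticeInf A] {κ : Cardinal} {G : Set (Set A)}

lemma univ_mem_BLKappa : Set.univ ∈ BLKappa κ G :=
  Set.mem_sInter.2 fun _ hC => hC.2.2.1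

lemma inter_mem_BLKappa {E F : Set A} (hE : E ∈ BLKappa κ G) (hF : F ∈ BLKappa κ G) :
    E ∩ F ∈ BLKappa κ G :=
  Set.mem_sInter.2 fun C hC =>
    hC.2.2.2.1 E (Set.mem_sInter.1 hE C hC) F (Set.mem_sInter.1 hF C hC)

lemma mem_BLKappa_of_isBLJoin {T : Set (Set A)} (hT : T ⊆ BLKappa κ G) (hTκ : #T < κ)
    {J : Set A} (hJ : IsBLJoin T J) : J ∈ BLKappa κ G :=
  Set.mem_sInter.2 fun C hC =>
    hC.2.2.2.2 T (fun _ hE => Set.mem_sInter.1 (hT hE) C hC) hTκ J hJ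

end BLKappa

lemma relAnn_mem_pHExt {A : Type*} [SemilatticeInf A] (a b : A) : RelAnn a b ∈ pHExt A :=
  Set.mem_sInter.2 fun _ hC => hC.2.1 a b

theorem relAnn_mem_BLKappa_inter_DM_iff_general (A : Type*) [DistribLattice A]
    (κ : Cardinal) (hκ : κ.IsRegular) :
    (∀ a b : A, RelAnn a b ∈
        BLKappa κ (Set.range (Set.Iic : A → Set A)) ∩ {N : Set A | IsNormalIdeal N}) ↔
      pHExt A ⊆
        BLKappa κ (Set.range (Set.Iic : A → Set A)) ∩ {N : Set A | IsNormalIdeal N} := by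
  set K := BLKappa κ (Set.range (Set.Iic : A → Set A))
  refine ⟨fun h => ?_, fun h a b => h (relAnn_mem_pHExt a b)⟩
  have hRel : ∀ a b : A, IsNormalIdeal (RelAnn a b) := fun a b => (h a b).2
  have hjoin : ∀ T ⊆ K ∩ {N | IsNormalIdeal N}, T.Finite → ∀ J, IsBLJoin T J →
      J ∈ K ∩ {N | IsNormalIdeal N} := fun T hT hfin J hJ =>
    ⟨mem_BLKappa_of_isBLJoin (fun _ hE => (hT hE).1)
        (hfin.lt_aleph0.trans_le hκ.aleph0_le) hJ,
      hJ.eq_lowerBounds_upperBounds hRel ▸ isNormalIdeal_lowerBounds_upperBounds _⟩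
  refine Set.sInter_subset_of_mem ⟨fun _ hN => hN.2.isDIdeal, h,
    ⟨univ_mem_BLKappa, isNormalIdeal_univ⟩,
    fun J => hjoin ∅ (Set.empty_subset _) Set.finite_empty J,
    fun E hE F hF => ⟨inter_mem_BLKappa hE.1 hF.1, hE.2.inter hF.2⟩,
    fun E hE F hF => hjoin {E, F} (Set.pair_subset hE hF) (Set.toFinite _)⟩

/-- For a bounded distributive lattice `A` and an infinite regular
cardinal `κ`: every relative annihilator of `A` belongs to `BL_κ A ∩ DM A` (it is a
normal ideal lying in the sub-κ-frame of `BL A` generated by the principal D-ideals)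
iff `pH A ⊆ BL_κ A ∩ DM A`. -/
theorem relAnn_mem_BLKappa_inter_DM_iff (A : Type*) [DistribLattice A] [BoundedOrder A]
    (κ : Cardinal) (hκ : κ.IsRegular) :
    (∀ a b : A, RelAnn a b ∈
        BLKappa κ (Set.range (Set.Iic : A → Set A)) ∩ {N : Set A | IsNormalIdeal N}) ↔
      pHExt A ⊆
        BLKappa κ (Set.range (Set.Iic : A → Set A)) ∩ {N : Set A | IsNormalIdeal N} :=
  relAnn_mem_BLKappa_inter_DM_iff_general A κ hκ
end

section
/- Let X be a Priestley space, let 𝒰 be a family of DM-sets of X, and let J be a DM-set that is the least DM-set containing ⋃𝒰 (the supremum of 𝒰 in the poset of DM-sets ordered by inclusion). Then the following are equivalent: (1) for every DM-set V, the set V ∩ J is a DM-set and is the least DM-set containing V ∩ U for every U ∈ 𝒰 (i.e., the join of 𝒰 is distributive); (2) J = int₁(cl(⋃𝒰)). -/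
open Cardinal

section PriestleyDefs

variable {X : Type*} [TopologicalSpace X] [Preorder X]

/-- The upward closure `↑S` of a set. -/
def upSet (S : Set X) : Set X := {x : X | ∃ y ∈ S, y ≤ x}

/-- The downward closure `↓S` of a set. -/
def downSet (S : Set X) : Set X := {x : X | ∃ y ∈ S, x ≤ y}

/-- `cl₂(S) = ↑cl(S)`, the closure in the topology of open downsets. -/
def cl2 (S : Set X) : Set X := upSet (closure S)

/-- `int₁(S) = X \ ↓(X \ int(S))`, the interior in the topology of open upsets. -/
def int1 (S : Set X) : Set X := (downSet ((interior S)ᶜ))ᶜ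

/-- A Dedekind–MacNeille set: an open upset `U` with `int₁(cl₂(U)) = U`. -/
def IsDMSet (U : Set X) : Prop := IsOpen U ∧ IsUpperSet U ∧ int1 (cl2 U) = U

/-- A clopen upset. -/
def IsClopenUpset (U : Set X) : Prop := IsClopen U ∧ IsUpperSet U

/-- A κ-clopen upset: a union of fewer than `κ` clopen upsets. -/
def IsKappaClopenUpset (κ : Cardinal) (U : Set X) : Prop :=
  ∃ 𝒮 : Set (Set X), (∀ W ∈ 𝒮, IsClopenUpset W) ∧ #𝒮 < κ ∧ U = ⋃₀ 𝒮

end PriestleyDefs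

section Aux

variable {X : Type*} [TopologicalSpace X] [Preorder X]

lemma subset_upSet' (S : Set X) : S ⊆ upSet S := fun x hx => ⟨x, hx, le_refl x⟩

lemma isUpperSet_upSet' (S : Set X) : IsUpperSet (upSet S) := by
  rintro a b hab ⟨s, hs, hsa⟩
  exact ⟨s, hs, hsa.trans hab⟩

lemma upSet_mono' {S T : Set X} (h : S ⊆ T) : upSet S ⊆ upSet T := by
  rintro x ⟨s, hs, hsx⟩
  exact ⟨s, h hs, hsx⟩

lemma upSet_subset' {S T : Set X} (h : S ⊆ T) (hT : IsUpperSet T) : upSet S ⊆ T := by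
  rintro x ⟨s, hs, hsx⟩
  exact hT hsx (h hs)

lemma downSet_mono' {S T : Set X} (h : S ⊆ T) : downSet S ⊆ downSet T := by
  rintro x ⟨s, hs, hsx⟩
  exact ⟨s, h hs, hsx⟩

lemma isLowerSet_downSet' (S : Set X) : IsLowerSet (downSet S) := by
  rintro a b hba ⟨s, hs, has⟩
  exact ⟨s, hs, hba.trans has⟩

lemma cl2_mono' {S T : Set X} (h : S ⊆ T) : cl2 S ⊆ cl2 T :=
  upSet_mono' (closure_mono h)

lemma subset_cl2' (S : Set X) : S ⊆ cl2 S :=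
  subset_closure.trans (subset_upSet' _)

lemma isUpperSet_cl2' (S : Set X) : IsUpperSet (cl2 S) := isUpperSet_upSet' _

lemma int1_subset_interior' (T : Set X) : int1 T ⊆ interior T := by
  intro x hx
  by_contra h
  exact hx ⟨x, h, le_refl x⟩

lemma int1_mono' {S T : Set X} (h : S ⊆ T) : int1 S ⊆ int1 T := by
  intro x hx hc
  exact hx (downSet_mono' (Set.compl_subset_compl.mpr (interior_mono h)) hc)

lemma isUpperSet_int1' (T : Set X) : IsUpperSet (int1 T) :=
  (isLowerSet_downSet' _).compl

lemma subset_int1' {W T : Set X} (hWo : IsOpen W) (hWu : IsUpperSet W) (hWT : W ⊆ T) :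
    W ⊆ int1 T := by
  intro x hx
  rintro ⟨z, hz, hxz⟩
  exact hz (interior_maximal hWT hWo (hWu hxz hx))

end Aux

section PriestleyAux

variable {X : Type*} [TopologicalSpace X] [Preorder X] [CompactSpace X] [PriestleySpace X]

lemma isClosed_downSet_of_isClosed' {C : Set X} (hC : IsClosed C) : IsClosed (downSet C) := by
  rw [← isOpen_compl_iff, isOpen_iff_forall_mem_open]
  intro x hx
  have hsep : ∀ c : C, ∃ V : Set X, IsClopen V ∧ IsUpperSet V ∧ x ∈ V ∧ (c : X) ∉ V := by
    intro c
    exact exists_isClopen_upper_of_not_le (fun hle => hx ⟨c, c.2, hle⟩)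
  choose V hV₁ hV₂ hV₃ hV₄ using hsep
  obtain ⟨t, ht⟩ := hC.isCompact.elim_finite_subcover (fun c : C => (V c)ᶜ)
    (fun c => (hV₁ c).isClosed.isOpen_compl)
    (fun c hc => Set.mem_iUnion.2 ⟨⟨c, hc⟩, hV₄ _⟩)
  refine ⟨⋂ c ∈ t, V c, ?_, ?_, ?_⟩
  · rintro v hv ⟨c, hc, hvc⟩
    obtain ⟨c', hc't, hcc'⟩ := Set.mem_iUnion₂.1 (ht hc)
    have hvV : v ∈ V c' := by
      simp only [Set.mem_iInter] at hv
      exact hv c' hc't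
    exact hcc' ((hV₂ c') hvc hvV)
  · exact isOpen_biInter_finset (fun c _ => (hV₁ c).isOpen)
  · exact Set.mem_iInter₂.2 fun c _ => hV₃ c

lemma isClosed_upSet_of_isClosed' {C : Set X} (hC : IsClosed C) : IsClosed (upSet C) := by
  rw [← isOpen_compl_iff, isOpen_iff_forall_mem_open]
  intro x hx
  have hsep : ∀ c : C, ∃ V : Set X, IsClopen V ∧ IsUpperSet V ∧ (c : X) ∈ V ∧ x ∉ V := by
    intro c
    exact exists_isClopen_upper_of_not_le (fun hle => hx ⟨c, c.2, hle⟩)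
  choose V hV₁ hV₂ hV₃ hV₄ using hsep
  obtain ⟨t, ht⟩ := hC.isCompact.elim_finite_subcover (fun c : C => V c)
    (fun c => (hV₁ c).isOpen)
    (fun c hc => Set.mem_iUnion.2 ⟨⟨c, hc⟩, hV₃ _⟩)
  refine ⟨(⋃ c ∈ t, V c)ᶜ, ?_, ?_, ?_⟩
  · rintro v hv ⟨c, hc, hcv⟩
    obtain ⟨c', hc't, hcc'⟩ := Set.mem_iUnion₂.1 (ht hc)
    exact hv (Set.mem_iUnion₂.2 ⟨c', hc't, (hV₂ c') hcv hcc'⟩)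
  · exact (Set.Finite.isClosed_biUnion t.finite_toSet (fun c _ => (hV₁ c).isClosed)).isOpen_compl
  · intro h
    obtain ⟨c', _, h'⟩ := Set.mem_iUnion₂.1 h
    exact hV₄ c' h'

lemma isOpen_int1' (T : Set X) : IsOpen (int1 T) :=
  (isClosed_downSet_of_isClosed' isOpen_interior.isClosed_compl).isOpen_compl

lemma isClosed_cl2' (T : Set X) : IsClosed (cl2 T) :=
  isClosed_upSet_of_isClosed' isClosed_closure

lemma subset_phi' {W : Set X} (hWo : IsOpen W) (hWu : IsUpperSet W) :
    W ⊆ int1 (cl2 W) :=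
  subset_int1' hWo hWu (subset_cl2' W)

lemma phi_subset_cl2' (W : Set X) : int1 (cl2 W) ⊆ cl2 W :=
  (int1_subset_interior' _).trans interior_subset

lemma cl2_phi' {W : Set X} (hWo : IsOpen W) (hWu : IsUpperSet W) :
    cl2 (int1 (cl2 W)) = cl2 W := by
  apply subset_antisymm
  · exact upSet_subset' (closure_minimal (phi_subset_cl2' W) (isClosed_cl2' W)) (isUpperSet_cl2' W)
  · exact cl2_mono' (subset_phi' hWo hWu)

lemma isDM_phi' {W : Set X} (hWo : IsOpen W) (hWu : IsUpperSet W) :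
    IsDMSet (int1 (cl2 W)) :=
  ⟨isOpen_int1' _, isUpperSet_int1' _, by rw [cl2_phi' hWo hWu]⟩

lemma phi_subset_of_DM' {W K : Set X} (hK : IsDMSet K) (h : W ⊆ K) :
    int1 (cl2 W) ⊆ K := by
  have h2 : int1 (cl2 W) ⊆ int1 (cl2 K) := int1_mono' (cl2_mono' h)
  rwa [hK.2.2] at h2

lemma IsDMSet.inter' {V J : Set X} (hV : IsDMSet V) (hJ : IsDMSet J) : IsDMSet (V ∩ J) := by
  refine ⟨hV.1.inter hJ.1, hV.2.1.inter hJ.2.1, subset_antisymm ?_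
    (subset_phi' (hV.1.inter hJ.1) (hV.2.1.inter hJ.2.1))⟩
  exact Set.subset_inter (phi_subset_of_DM' hV Set.inter_subset_left)
    (phi_subset_of_DM' hJ Set.inter_subset_right)

lemma isDM_of_clopenUpset' {a : Set X} (ha : IsClopen a) (hau : IsUpperSet a) : IsDMSet a := by
  refine ⟨ha.isOpen, hau, subset_antisymm ?_ (subset_phi' ha.isOpen hau)⟩
  have h1 : cl2 a ⊆ a := upSet_subset' (closure_minimal subset_rfl ha.isClosed) hau
  exact ((int1_subset_interior' _).trans interior_subset).trans h1

lemma le_of_mem_clopenUpsets' {y w : X}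
    (h : ∀ a : Set X, IsClopen a → IsUpperSet a → y ∈ a → w ∈ a) : y ≤ w := by
  by_contra hyw
  obtain ⟨U, hU, hUu, hyU, hwU⟩ := exists_isClopen_upper_of_not_le hyw
  exact hwU (h U hU hUu hyU)

end PriestleyAux

/-- Let `X` be a Priestley space, `𝒰` a family of DM-sets, and `J`
the least DM-set containing `⋃₀ 𝒰` (the supremum of `𝒰` among DM-sets). Then: for
every DM-set `V`, the set `V ∩ J` is a DM-set and is the least DM-set containing
`V ∩ U` for every `U ∈ 𝒰` (the join of `𝒰` is distributive) iff
`J = int₁(cl(⋃₀ 𝒰))`. -/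
theorem DM_join_distributive_iff (X : Type*) [TopologicalSpace X] [PartialOrder X]
    [CompactSpace X] [PriestleySpace X]
    (𝒰 : Set (Set X)) (h𝒰 : ∀ U ∈ 𝒰, IsDMSet U)
    (J : Set X) (hJ : IsDMSet J) (hJ₁ : ⋃₀ 𝒰 ⊆ J)
    (hJ₂ : ∀ K : Set X, IsDMSet K → ⋃₀ 𝒰 ⊆ K → J ⊆ K) :
    (∀ V : Set X, IsDMSet V →
        IsDMSet (V ∩ J) ∧ (∀ U ∈ 𝒰, V ∩ U ⊆ V ∩ J) ∧
          ∀ K : Set X, IsDMSet K → (∀ U ∈ 𝒰, V ∩ U ⊆ K) → V ∩ J ⊆ K) ↔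
      J = int1 (closure (⋃₀ 𝒰)) := by
  set S : Set X := ⋃₀ 𝒰 with hSdef
  have hSo : IsOpen S := isOpen_sUnion (fun U hU => (h𝒰 U hU).1)
  have hSu : IsUpperSet S := by
    rintro a b hab ⟨W, hW, haW⟩
    exact ⟨W, hW, (h𝒰 W hW).2.1 hab haW⟩
  -- J is the "phi" of S
  have hJeq : J = int1 (cl2 S) := by
    apply subset_antisymm
    · exact hJ₂ _ (isDM_phi' hSo hSu) (subset_phi' hSo hSu)
    · exact phi_subset_of_DM' hJ hJ₁
  constructor
  · -- distributivity → J = int1 (closure S)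
    intro h
    have hJcl : J ⊆ closure S := by
      intro y hy
      -- index type: clopen upsets containing y
      let ι := {a : Set X // IsClopen a ∧ IsUpperSet a ∧ y ∈ a}
      have hne : Nonempty ι := ⟨⟨Set.univ, isClopen_univ, isUpperSet_univ, Set.mem_univ y⟩⟩
      let Z : ι → Set X := fun a => closure (a.1 ∩ S) ∩ downSet {y}
      have hZcl : ∀ a : ι, IsClosed (Z a) := fun a =>
        isClosed_closure.inter (isClosed_downSet_of_isClosed' isClosed_singleton)
      have hZcomp : ∀ a : ι, IsCompact (Z a) := fun a => (hZcl a).isCompact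
      have hZne : ∀ a : ι, (Z a).Nonempty := by
        rintro ⟨a, ha, hau, hya⟩
        have haDM : IsDMSet a := isDM_of_clopenUpset' ha hau
        have hiO : IsOpen (a ∩ S) := ha.isOpen.inter hSo
        have hiU : IsUpperSet (a ∩ S) := hau.inter hSu
        have h3 : a ∩ J ⊆ int1 (cl2 (a ∩ S)) := by
          refine (h a haDM).2.2 _ (isDM_phi' hiO hiU) ?_
          intro U hU
          refine (Set.inter_subset_inter_right a (Set.subset_sUnion_of_mem hU)).trans ?_
          exact subset_phi' hiO hiU
        have hy2 : y ∈ cl2 (a ∩ S) := phi_subset_cl2' _ (h3 ⟨hya, hy⟩)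
        obtain ⟨w, hw, hwy⟩ := hy2
        exact ⟨w, hw, ⟨y, rfl, hwy⟩⟩
      have hZdir : Directed (· ⊇ ·) Z := by
        rintro a b
        refine ⟨⟨a.1 ∩ b.1, a.2.1.inter b.2.1, a.2.2.1.inter b.2.2.1, a.2.2.2, b.2.2.2⟩, ?_, ?_⟩
        · exact Set.inter_subset_inter
            (closure_mono (fun x hx => ⟨hx.1.1, hx.2⟩)) subset_rfl
        · exact Set.inter_subset_inter
            (closure_mono (fun x hx => ⟨hx.1.2, hx.2⟩)) subset_rfl
      obtain ⟨w, hw⟩ := IsCompact.nonempty_iInter_of_directed_nonempty_isCompact_isClosed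
        Z hZdir hZne hZcomp hZcl
      simp only [Set.mem_iInter] at hw
      have hwy : w ≤ y := by
        obtain ⟨_, hc, hle⟩ := (hw (Classical.arbitrary ι)).2
        cases hc
        exact hle
      have hyw : y ≤ w := by
        apply le_of_mem_clopenUpsets'
        intro a ha hau hya
        have := (hw ⟨a, ha, hau, hya⟩).1
        exact closure_minimal Set.inter_subset_left ha.isClosed this
      have hwey : w = y := le_antisymm hwy hyw
      have := (hw ⟨Set.univ, isClopen_univ, isUpperSet_univ, Set.mem_univ y⟩).1
      rw [Set.univ_inter, hwey] at this
      exact this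
    apply subset_antisymm
    · exact subset_int1' hJ.1 hJ.2.1 hJcl
    · calc int1 (closure S) ⊆ int1 (cl2 S) := int1_mono' (subset_upSet' _)
        _ = J := hJeq.symm
  · -- J = int1 (closure S) → distributivity
    intro hEq V hV
    refine ⟨hV.inter' hJ, ?_, ?_⟩
    · intro U hU
      exact Set.inter_subset_inter_right V ((Set.subset_sUnion_of_mem hU).trans hJ₁)
    · intro K hK hKU
      have hVS : V ∩ S ⊆ K := by
        rintro x ⟨hxV, W, hW, hxW⟩
        exact hKU W hW ⟨hxV, hxW⟩
      refine fun x hx => phi_subset_of_DM' hK hVS ?_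
      obtain ⟨hxV, hxJ⟩ := hx
      rintro ⟨z, hz, hxz⟩
      have hxint : x ∈ int1 (closure S) := hEq ▸ hxJ
      have hz1 : z ∈ int1 (closure S) := isUpperSet_int1' _ hxz hxint
      have hzV : z ∈ V := hV.2.1 hxz hxV
      have hzi : z ∈ interior (closure S) := int1_subset_interior' _ hz1
      have hN : V ∩ interior (closure S) ⊆ closure (V ∩ S) := by
        rintro p ⟨hpV, hpi⟩
        rw [mem_closure_iff]
        intro o ho hpo
        have hp : p ∈ closure S := interior_subset hpi
        obtain ⟨q, ⟨hqo, hqV⟩, hqS⟩ :=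
          mem_closure_iff.1 hp (o ∩ V) (ho.inter hV.1) ⟨hpo, hpV⟩
        exact ⟨q, hqo, hqV, hqS⟩
      have hz2 : z ∈ interior (closure (V ∩ S)) :=
        interior_maximal hN (hV.1.inter isOpen_interior) ⟨hzV, hzi⟩
      exact hz (interior_mono (subset_upSet' _) hz2)
end

section
/- Let X be a Priestley space and 𝒮 a family of clopen upsets of X such that ↑cl(⋃𝒮) is clopen (so that ↑cl(⋃𝒮) is the least clopen upset containing every member of 𝒮, i.e., the supremum of 𝒮 in ClopUp(X)). Then this supremum is distributive — i.e., for every clopen upset V of X, the set V ∩ ↑cl(⋃𝒮) is the least clopen upset of X containing V ∩ U for every U ∈ 𝒮 — if and only if ↑cl(⋃𝒮) = cl(⋃𝒮). -/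
open Cardinal

/-- Let `X` be a Priestley space and `𝒮` a family of clopen upsets
such that `↑cl(⋃₀ 𝒮)` is clopen (so it is the supremum of `𝒮` in `ClopUp(X)`). This
supremum is distributive — for every clopen upset `V`, the set `V ∩ ↑cl(⋃₀ 𝒮)` is
the least clopen upset containing `V ∩ U` for every `U ∈ 𝒮` — iff
`↑cl(⋃₀ 𝒮) = cl(⋃₀ 𝒮)`. -/
theorem clopUp_sup_distributive_iff (X : Type*) [TopologicalSpace X] [PartialOrder X]
    [CompactSpace X] [PriestleySpace X]
    (𝒮 : Set (Set X)) (h𝒮 : ∀ U ∈ 𝒮, IsClopenUpset U)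
    (hcl : IsClopen (cl2 (⋃₀ 𝒮))) :
    (∀ V : Set X, IsClopenUpset V →
        IsClopenUpset (V ∩ cl2 (⋃₀ 𝒮)) ∧ (∀ U ∈ 𝒮, V ∩ U ⊆ V ∩ cl2 (⋃₀ 𝒮)) ∧
          ∀ K : Set X, IsClopenUpset K → (∀ U ∈ 𝒮, V ∩ U ⊆ K) → V ∩ cl2 (⋃₀ 𝒮) ⊆ K) ↔
      cl2 (⋃₀ 𝒮) = closure (⋃₀ 𝒮) := by
  classical
  set S : Set X := ⋃₀ 𝒮 with hS
  have hclsub : closure S ⊆ cl2 S := fun z hz => ⟨z, hz, le_refl z⟩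
  have hup : IsUpperSet (cl2 S) := by
    intro a b hab ⟨y, hy, hya⟩
    exact ⟨y, hy, hya.trans hab⟩
  constructor
  · intro hdist
    refine subset_antisymm ?_ hclsub
    intro x hx
    by_contra hxcl
    -- separation: for each z in closure S, a clopen set containing z, missing x,
    -- which is an upset or a lower set
    have key : ∀ z : X, z ∈ closure S → ∃ W : Set X, IsClopen W ∧ z ∈ W ∧ x ∉ W ∧
        (IsUpperSet W ∨ IsLowerSet W) := by
      intro z hz
      by_cases hzx : z ≤ x
      · have hne : z ≠ x := fun h => hxcl (h ▸ hz)
        have hxz : ¬ x ≤ z := fun h => hne (le_antisymm hzx h)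
        obtain ⟨U, hU, hUup, hxU, hzU⟩ := exists_isClopen_upper_of_not_le hxz
        exact ⟨Uᶜ, hU.compl, hzU, fun h => h hxU, Or.inr hUup.compl⟩
      · obtain ⟨U, hU, hUup, hzU, hxU⟩ := exists_isClopen_upper_of_not_le hzx
        exact ⟨U, hU, hzU, hxU, Or.inl hUup⟩
    choose! W hWclopen hWmem hWx hWmono using key
    have hcpt : IsCompact (closure S) := isClosed_closure.isCompact
    obtain ⟨t, ht⟩ := hcpt.elim_finite_subcover
      (fun p : closure S => W p) (fun p => (hWclopen p p.2).isOpen)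
      (fun z hz => Set.mem_iUnion.2 ⟨⟨z, hz⟩, hWmem z hz⟩)
    set t₁ : Finset (closure S) := t.filter (fun p => IsUpperSet (W p)) with ht₁
    set K : Set X := ⋃ p ∈ t₁, W p with hK
    set D : Set X := ⋃ p ∈ t \ t₁, W p with hD
    have hKclopen : IsClopen K := by
      apply Set.Finite.isClopen_biUnion t₁.finite_toSet
      intro p _
      exact hWclopen p p.2
    have hKup : IsUpperSet K := by
      apply isUpperSet_iUnion₂
      intro p hp
      exact (Finset.mem_filter.1 hp).2
    have hxK : x ∉ K := by
      simp only [hK, Set.mem_iUnion]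
      rintro ⟨p, _, hp⟩
      exact hWx p p.2 hp
    have hDclopen : IsClopen D := by
      apply Set.Finite.isClopen_biUnion (t \ t₁).finite_toSet
      intro p _
      exact hWclopen p p.2
    have hDlow : IsLowerSet D := by
      apply isLowerSet_iUnion₂
      intro p hp
      rcases Finset.mem_sdiff.1 hp with ⟨hpt, hpn⟩
      rcases hWmono p p.2 with h | h
      · exact absurd (Finset.mem_filter.2 ⟨hpt, h⟩) hpn
      · exact h
    have hxD : x ∉ D := by
      simp only [hD, Set.mem_iUnion]
      rintro ⟨p, _, hp⟩
      exact hWx p p.2 hp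
    have hVclopup : IsClopenUpset Dᶜ := ⟨hDclopen.compl, hDlow.compl⟩
    obtain ⟨-, -, hleast⟩ := hdist Dᶜ hVclopup
    have hsub : Dᶜ ∩ cl2 S ⊆ K := by
      apply hleast K ⟨hKclopen, hKup⟩
      intro U hU
      intro z ⟨hzD, hzU⟩
      have hzcl : z ∈ closure S := subset_closure (Set.mem_sUnion.2 ⟨U, hU, hzU⟩)
      obtain ⟨p, hpt, hp⟩ := Set.mem_iUnion₂.1 (ht hzcl)
      by_cases hpu : p ∈ t₁
      · exact Set.mem_iUnion₂.2 ⟨p, hpu, hp⟩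
      · exact absurd (Set.mem_iUnion₂.2 ⟨p, Finset.mem_sdiff.2 ⟨hpt, hpu⟩, hp⟩) hzD
    exact hxK (hsub ⟨hxD, hx⟩)
  · intro hcleq V hV
    refine ⟨⟨hV.1.inter hcl, hV.2.inter hup⟩, ?_, ?_⟩
    · intro U hU
      apply Set.inter_subset_inter_right
      intro z hz
      exact hclsub (subset_closure (Set.mem_sUnion.2 ⟨U, hU, hz⟩))
    · intro K hK hKU
      have h1 : V ∩ S ⊆ K := by
        rintro z ⟨hzV, hzS⟩
        obtain ⟨U, hU, hzU⟩ := hzS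
        exact hKU U hU ⟨hzV, hzU⟩
      calc V ∩ cl2 S = V ∩ closure S := by rw [hcleq]
        _ ⊆ closure (V ∩ S) := hV.1.isOpen.inter_closure
        _ ⊆ closure K := closure_mono h1
        _ = K := hK.1.isClosed.closure_eq
end

section
/- Let X be a Priestley space and κ an infinite regular cardinal. Then ClopUp(X) is a κ-frame — i.e., every family of fewer than κ clopen upsets of X has a supremum in ClopUp(X), and for every such family 𝒮 with supremum J and every clopen upset V, the set V ∩ J is the supremum in ClopUp(X) of {V ∩ U : U ∈ 𝒮} — if and only if cl(U) is a clopen upset of X for every κ-clopen upset U of X. -/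
open Cardinal

/-- Let `X` be a Priestley space and `κ` an infinite regular
cardinal. Then `ClopUp(X)` is a κ-frame — every family of fewer than `κ` clopen
upsets has a supremum in `ClopUp(X)`, and every such supremum is distributive — iff
`cl(U)` is a clopen upset of `X` for every κ-clopen upset `U` of `X`. -/
theorem clopUp_kappaFrame_iff (X : Type*) [TopologicalSpace X] [PartialOrder X]
    [CompactSpace X] [PriestleySpace X] (κ : Cardinal) (hκ : κ.IsRegular) :
    ((∀ 𝒮 : Set (Set X), (∀ U ∈ 𝒮, IsClopenUpset U) → #𝒮 < κ →
        ∃ J : Set X, IsClopenUpset J ∧ (∀ U ∈ 𝒮, U ⊆ J) ∧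
          ∀ K : Set X, IsClopenUpset K → (∀ U ∈ 𝒮, U ⊆ K) → J ⊆ K) ∧
      (∀ 𝒮 : Set (Set X), (∀ U ∈ 𝒮, IsClopenUpset U) → #𝒮 < κ →
        ∀ J : Set X, IsClopenUpset J → (∀ U ∈ 𝒮, U ⊆ J) →
          (∀ K : Set X, IsClopenUpset K → (∀ U ∈ 𝒮, U ⊆ K) → J ⊆ K) →
          ∀ V : Set X, IsClopenUpset V →
            IsClopenUpset (V ∩ J) ∧ (∀ U ∈ 𝒮, V ∩ U ⊆ V ∩ J) ∧
              ∀ K : Set X, IsClopenUpset K → (∀ U ∈ 𝒮, V ∩ U ⊆ K) → V ∩ J ⊆ K)) ↔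
      (∀ U : Set X, IsKappaClopenUpset κ U → IsClopenUpset (closure U)) := by
  constructor
  · rintro ⟨h1, h2⟩ U ⟨𝒮, h𝒮, hcard, hU⟩
    obtain ⟨J, hJ, hub, hlub⟩ := h1 𝒮 h𝒮 hcard
    have hUJ : U ⊆ J := by
      rw [hU]; exact Set.sUnion_subset hub
    have hclJ : closure U ⊆ J := closure_minimal hUJ hJ.1.isClosed
    have hJcl : J ⊆ closure U := by
      intro x hxJ
      by_contra hxF
      -- separate x from the closed set F = closure U
      set F := closure U with hF
      have key : ∀ y ∈ F, ∃ A B : Set X, IsClopenUpset A ∧ IsClopenUpset B ∧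
          x ∈ A ∧ x ∉ B ∧ y ∈ (A \ B)ᶜ := by
        intro y hy
        have hxy : x ≠ y := fun h => hxF (h ▸ hy)
        rcases (not_and_or.mp (fun h : x ≤ y ∧ y ≤ x => hxy (le_antisymm h.1 h.2))) with h | h
        · obtain ⟨A, hA, hAup, hxA, hyA⟩ := exists_isClopen_upper_of_not_le h
          exact ⟨A, ∅, ⟨hA, hAup⟩, ⟨isClopen_empty, fun _ _ _ h => h⟩, hxA,
            Set.notMem_empty x, by simp [hyA]⟩
        · obtain ⟨B, hB, hBup, hyB, hxB⟩ := exists_isClopen_upper_of_not_le h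
          exact ⟨Set.univ, B, ⟨isClopen_univ, isUpperSet_univ⟩, ⟨hB, hBup⟩, Set.mem_univ x,
            hxB, by simp [hyB]⟩
      choose! A B hAcu hBcu hxA hxB hyC using key
      have hFcpt : IsCompact F := isClosed_closure.isCompact
      obtain ⟨t, hts, htfin, hcov⟩ := hFcpt.elim_finite_subcover_image
        (fun y (hy : y ∈ F) => ((hAcu y hy).1.diff (hBcu y hy).1).compl.isOpen)
        (fun z hz => Set.mem_biUnion hz (hyC z hz))
      set V : Set X := ⋂ y ∈ t, A y with hV
      set V' : Set X := ⋃ y ∈ t, B y with hV'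
      have hVcu : IsClopenUpset V :=
        ⟨htfin.isClopen_biInter fun y hy => (hAcu y (hts hy)).1,
         isUpperSet_iInter₂ fun y hy => (hAcu y (hts hy)).2⟩
      have hV'cu : IsClopenUpset V' :=
        ⟨htfin.isClopen_biUnion fun y hy => (hBcu y (hts hy)).1,
         isUpperSet_iUnion₂ fun y hy => (hBcu y (hts hy)).2⟩
      have hxV : x ∈ V := Set.mem_iInter₂.mpr fun y hy => hxA y (hts hy)
      have hxV' : x ∉ V' := fun hx => by
        obtain ⟨y, hy, hxB'⟩ := Set.mem_iUnion₂.mp hx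
        exact hxB y (hts hy) hxB'
      have hdisj : ∀ z ∈ F, z ∈ V → z ∈ V' := by
        intro z hzF hzV
        by_contra hzV'
        obtain ⟨y, hy, hzC⟩ := Set.mem_iUnion₂.mp (hcov hzF)
        exact hzC ⟨Set.mem_iInter₂.mp hzV y hy, fun hzB => hzV' (Set.mem_biUnion hy hzB)⟩
      have hsub : ∀ W ∈ 𝒮, V ∩ W ⊆ V' := by
        intro W hW z ⟨hzV, hzW⟩
        exact hdisj z (subset_closure (hU ▸ Set.mem_sUnion.mpr ⟨W, hW, hzW⟩)) hzV
      have := (h2 𝒮 h𝒮 hcard J hJ hub hlub V hVcu).2.2 V' hV'cu hsub ⟨hxV, hxJ⟩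
      exact hxV' this
    have : closure U = J := le_antisymm hclJ hJcl
    rw [this]; exact hJ
  · intro h
    have hsup : ∀ 𝒮 : Set (Set X), (∀ U ∈ 𝒮, IsClopenUpset U) → #𝒮 < κ →
        IsClopenUpset (closure (⋃₀ 𝒮)) ∧ (∀ U ∈ 𝒮, U ⊆ closure (⋃₀ 𝒮)) ∧
          ∀ K : Set X, IsClopenUpset K → (∀ U ∈ 𝒮, U ⊆ K) → closure (⋃₀ 𝒮) ⊆ K := by
      intro 𝒮 h𝒮 hcard
      refine ⟨h _ ⟨𝒮, h𝒮, hcard, rfl⟩, fun U hU => (Set.subset_sUnion_of_mem hU).trans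
        subset_closure, fun K hK hub => closure_minimal (Set.sUnion_subset hub) hK.1.isClosed⟩
    constructor
    · intro 𝒮 h𝒮 hcard
      obtain ⟨h1, h2', h3⟩ := hsup 𝒮 h𝒮 hcard
      exact ⟨_, h1, h2', h3⟩
    · intro 𝒮 h𝒮 hcard J hJ hub hlub V hV
      obtain ⟨h1, h2', h3⟩ := hsup 𝒮 h𝒮 hcard
      have hJeq : J = closure (⋃₀ 𝒮) :=
        le_antisymm (hlub _ h1 h2') (closure_minimal (Set.sUnion_subset hub) hJ.1.isClosed)
      refine ⟨⟨hV.1.inter hJ.1, hV.2.inter hJ.2⟩,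
        fun U hU => Set.inter_subset_inter_right _ (hub U hU), ?_⟩
      intro K hK hsub
      have : V ∩ J ⊆ closure (V ∩ ⋃₀ 𝒮) := by
        rw [hJeq]; exact hV.1.isOpen.inter_closure
      refine this.trans (closure_minimal ?_ hK.1.isClosed)
      rintro z ⟨hzV, W, hW, hzW⟩
      exact hsub W hW ⟨hzV, hzW⟩
end
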